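/- arXiv:1102.0696 — 8 statements merged into one kernel-verified Lean document; each statement's English description precedes it below -/
import Mathlib

section
/- Let n ≥ 0 and let K be a simplicial complex in a finite-dimensional real normed vector space E (in the sense of Mathlib's Geometry.SimplicialComplex over ℝ) with finitely many faces, such that every face of K has at most n+1 vertices (i.e. K has dimension at most n). Then there exists a topological embedding of the underlying space of K (the union of the convex hulls of its faces, with the subspace topology) into the cube [0,1]^{2n+1}, i.e. a continuous injective map K.space → (Fin (2n+1) → ℝ) that is a homeomorphism onto its image and whose image is contained in the set of functions with values in [0,1]. -/
/-!
Give the vertices distinct parameters `τ v ∈ [0,1]` and send `v` to the point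
`(τ v, (τ v)^2, …, (τ v)^(2n+1))` of the moment curve. Any `2n+2` points of the moment curve
are affinely independent (a nonzero polynomial of degree `≤ 2n+1` has at most `2n+1` roots),
so the vertex map is affinely independent on the union of any two faces. Its facewise affine
extension is therefore injective: two points of `K` are convex combinations of the vertices of
the union of their faces, and these weights are recovered from the image. The extension is
continuous, being affine on each of the finitely many closed faces, so as a continuous injection
of a compact space into a Hausdorff space it is an embedding. Its image lies in the convex hull
of the images of the vertices, hence in the cube.
-/

open Finset Polynomial

theorem eq_zero_of_sum_mul_pow_eq_zero {K ι : Type*} [Field K] {s : Finset ι} {t w : ι → K}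
    {m : ℕ} (ht : Set.InjOn t s) (hcard : #s ≤ m + 1)
    (h : ∀ j ≤ m, ∑ i ∈ s, w i * t i ^ j = 0) : ∀ i ∈ s, w i = 0 := by
  classical
  have h_eval : ∀ q : K[X], q.natDegree ≤ m → ∑ i ∈ s, w i * q.eval (t i) = 0 := by
    intro q hq
    simp_rw [eval_eq_sum_range' (Nat.lt_succ_of_le hq), Finset.mul_sum]
    rw [Finset.sum_comm]
    refine Finset.sum_eq_zero fun j hj => ?_
    rw [← mul_zero (q.coeff j), ← h j (Nat.lt_succ_iff.1 (Finset.mem_range.1 hj)),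
      Finset.mul_sum]
    exact Finset.sum_congr rfl fun i _ => by ring
  intro i hi
  -- the Lagrange basis polynomial of `i` has degree `#s - 1 ≤ m` and singles out `w i`
  have := h_eval (Lagrange.basis s t i) (by rw [Lagrange.natDegree_basis ht hi]; omega)
  rwa [Finset.sum_eq_single_of_mem i hi fun k hk hki => by
    rw [Lagrange.eval_basis_of_ne hki.symm hk, mul_zero], Lagrange.eval_basis_self ht hi,
    mul_one] at this

def momentCurve {K : Type*} [Monoid K] (m : ℕ) (x : K) : Fin m → K :=
  fun j => x ^ (j + 1 : ℕ)

theorem affineIndependent_momentCurve {K ι : Type*} [Field K] [Fintype ι] {m : ℕ} {t : ι → K}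
    (ht : Function.Injective t) (hcard : Fintype.card ι ≤ m + 1) :
    AffineIndependent K fun i => momentCurve m (t i) := by
  rw [affineIndependent_iff]
  intro s w hw₀ hw
  refine eq_zero_of_sum_mul_pow_eq_zero ht.injOn ((card_le_univ s).trans hcard) fun j hj => ?_
  rcases j with _ | j
  · simpa using hw₀
  · simpa [momentCurve, Finset.sum_apply] using congrFun hw ⟨j, by omega⟩

theorem momentCurve_mem_Icc {K : Type*} [Semiring K] [PartialOrder K] [IsOrderedRing K] {m : ℕ}
    {x : K} (hx : x ∈ Set.Icc 0 1) : momentCurve m x ∈ Set.Icc 0 1 :=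
  ⟨fun _ => pow_nonneg hx.1 _, fun _ => pow_le_one₀ hx.1 hx.2⟩

section ConvexWeights

variable {𝕜 E : Type*} [Ring 𝕜] [PartialOrder 𝕜] [AddCommGroup E] [Module 𝕜 E] {s t : Finset E}
  {w w₁ w₂ : E → 𝕜} {x : E}

/-- The weights vanish off `s`, so that weight functions attached to different faces can be
compared. -/
structure IsConvexWeights (s : Finset E) (w : E → 𝕜) (x : E) : Prop where
  eq_zero_of_notMem : ∀ v ∉ s, w v = 0
  nonneg : ∀ v ∈ s, 0 ≤ w v
  sum_eq_one : ∑ v ∈ s, w v = 1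
  sum_smul_eq : ∑ v ∈ s, w v • v = x

namespace IsConvexWeights

theorem mono (h : IsConvexWeights s w x) (hst : s ⊆ t) : IsConvexWeights t w x where
  eq_zero_of_notMem v hv := h.eq_zero_of_notMem v fun hvs => hv (hst hvs)
  nonneg v _ := by
    by_cases hv : v ∈ s
    · exact h.nonneg v hv
    · exact (h.eq_zero_of_notMem v hv).ge
  sum_eq_one :=
    (Finset.sum_subset hst fun v _ hv => h.eq_zero_of_notMem v hv).symm.trans h.sum_eq_one
  sum_smul_eq := (Finset.sum_subset hst fun v _ hv => by
    rw [h.eq_zero_of_notMem v hv, zero_smul]).symm.trans h.sum_smul_eq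

theorem finsum_smul_eq {M : Type*} [AddCommMonoid M] [Module 𝕜 M]
    (h : IsConvexWeights s w x) (g : E → M) : ∑ᶠ v, w v • g v = ∑ v ∈ s, w v • g v :=
  finsum_eq_sum_of_support_subset _ fun v hv => by
    by_contra hvs
    exact hv (by simp only [h.eq_zero_of_notMem v hvs, zero_smul])

theorem eq_of_affineIndependent (hs : AffineIndependent 𝕜 ((↑) : s → E))
    (h₁ : IsConvexWeights s w₁ x) (h₂ : IsConvexWeights s w₂ x) : w₁ = w₂ := by
  have heq := hs.eq_of_sum_eq_sum_subtype (h₁.sum_eq_one.trans h₂.sum_eq_one.symm)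
    (h₁.sum_smul_eq.trans h₂.sum_smul_eq.symm)
  funext v
  by_cases hv : v ∈ s
  · exact heq v hv
  · rw [h₁.eq_zero_of_notMem v hv, h₂.eq_zero_of_notMem v hv]

theorem map_affineMap {F : Type*} [AddCommGroup F] [Module 𝕜 F] (h : IsConvexWeights s w x)
    (A : E →ᵃ[𝕜] F) : A x = ∑ v ∈ s, w v • A v := by
  calc A x = A (s.affineCombination 𝕜 id w) := by
        rw [s.affineCombination_eq_linear_combination id w h.sum_eq_one, ← h.sum_smul_eq]; rfl
    _ = s.affineCombination 𝕜 (A ∘ id) w := s.map_affineCombination id w h.sum_eq_one A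
    _ = ∑ v ∈ s, w v • A v := s.affineCombination_eq_linear_combination _ w h.sum_eq_one

end IsConvexWeights

end ConvexWeights

theorem Finset.mem_convexHull_iff_exists_isConvexWeights {𝕜 E : Type*} [Field 𝕜]
    [LinearOrder 𝕜] [IsStrictOrderedRing 𝕜] [AddCommGroup E] [Module 𝕜 E] {s : Finset E}
    {x : E} : x ∈ convexHull 𝕜 (s : Set E) ↔ ∃ w : E → 𝕜, IsConvexWeights s w x := by
  classical
  constructor
  · rw [Finset.mem_convexHull']
    rintro ⟨w, hw₀, hw₁, hwx⟩
    refine ⟨fun v => if v ∈ s then w v else 0, fun v hv => if_neg hv,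
      fun v hv => by simpa [hv] using hw₀ v hv, ?_, ?_⟩
    · rw [Finset.sum_congr rfl fun v hv => if_pos hv, hw₁]
    · rw [Finset.sum_congr rfl fun v (hv : v ∈ s) => by rw [if_pos hv], hwx]
  · rintro ⟨w, _, hw₀, hw₁, hwx⟩
    exact Finset.mem_convexHull'.2 ⟨w, hw₀, hw₁, hwx⟩

theorem AffineIndependent.exists_affineMap_eq_on {k V F : Type*} [Field k] [AddCommGroup V]
    [Module k V] [FiniteDimensional k V] [AddCommGroup F] [Module k F] {s : Set V}
    (hs : AffineIndependent k ((↑) : s → V)) (q : V → F) :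
    ∃ A : V →ᵃ[k] F, ∀ v ∈ s, A v = q v := by
  classical
  -- extend `s` to an affine basis of `V` and interpolate through its barycentric coordinates
  obtain ⟨t, hst, ht, ht_span⟩ := exists_subset_affineIndependent_affineSpan_eq_top hs
  have : Fintype t := (finite_set_of_fin_dim_affineIndependent k ht).fintype
  let b : AffineBasis t k V := ⟨(↑), ht, by rwa [Subtype.range_coe]⟩
  refine ⟨(Fintype.linearCombination k fun i : t => q i).toAffineMap.comp b.coords,
    fun v hv => ?_⟩
  have hb : b ⟨v, hst hv⟩ = v := rfl
  rw [← hb]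
  simp only [AffineMap.coe_comp, Function.comp_apply, LinearMap.coe_toAffineMap,
    Fintype.linearCombination_apply, b.coords_apply, b.coord_apply, ite_smul, one_smul,
    zero_smul, Finset.sum_ite_eq', Finset.mem_univ, if_true]
  rfl

theorem AffineIndependent.eq_of_sum_eq_sum_finset {k V ι : Type*} [Ring k] [AddCommGroup V]
    [Module k V] {u : Finset ι} {p : ι → V} (hp : AffineIndependent k fun i : u => p i)
    {w₁ w₂ : ι → k} (hw : ∑ i ∈ u, w₁ i = ∑ i ∈ u, w₂ i)
    (hwp : ∑ i ∈ u, w₁ i • p i = ∑ i ∈ u, w₂ i • p i) : ∀ i ∈ u, w₁ i = w₂ i := by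
  rw [← Finset.sum_coe_sort u, ← Finset.sum_coe_sort u] at hw hwp
  exact fun i hi => hp.eq_of_sum_eq_sum (w₁ := fun j : u => w₁ j) (w₂ := fun j : u => w₂ j)
    hw hwp ⟨i, hi⟩ (Finset.mem_univ _)

namespace Geometry.SimplicialComplex

section Ring

variable {𝕜 E : Type*} [Ring 𝕜] [PartialOrder 𝕜] [AddCommGroup E] [Module 𝕜 E]
  {K : SimplicialComplex 𝕜 E} {s : Finset E}

theorem subset_vertices (hs : s ∈ K.faces) : (s : Set E) ⊆ K.vertices :=
  K.vertices_eq ▸ Set.subset_biUnion_of_mem (u := fun s : Finset E => (s : Set E)) hs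

theorem finite_vertices (hfin : K.faces.Finite) : K.vertices.Finite :=
  K.vertices_eq ▸ hfin.biUnion fun s _ => s.finite_toSet

end Ring

section Field

variable {𝕜 E : Type*} [Field 𝕜] [LinearOrder 𝕜] [IsStrictOrderedRing 𝕜] [AddCommGroup E]
  [Module 𝕜 E] {K : SimplicialComplex 𝕜 E} {s t : Finset E} {w w₁ w₂ : E → 𝕜} {x : E}

theorem isConvexWeights_unique (hs : s ∈ K.faces) (ht : t ∈ K.faces)
    (h₁ : IsConvexWeights s w₁ x) (h₂ : IsConvexWeights t w₂ x) : w₁ = w₂ := by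
  classical
  have hx : x ∈ convexHull 𝕜 ((s ∩ t : Finset E) : Set E) := by
    rw [Finset.coe_inter]
    exact K.inter_subset_convexHull hs ht
      ⟨Finset.mem_convexHull_iff_exists_isConvexWeights.2 ⟨w₁, h₁⟩,
        Finset.mem_convexHull_iff_exists_isConvexWeights.2 ⟨w₂, h₂⟩⟩
  obtain ⟨c, hc⟩ := Finset.mem_convexHull_iff_exists_isConvexWeights.1 hx
  exact (h₁.eq_of_affineIndependent (K.indep hs) (hc.mono Finset.inter_subset_left)).trans
    (h₂.eq_of_affineIndependent (K.indep ht) (hc.mono Finset.inter_subset_right)).symm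

theorem exists_isConvexWeights_of_mem_space (hx : x ∈ K.space) :
    ∃ w : E → 𝕜, ∃ s ∈ K.faces, IsConvexWeights s w x := by
  obtain ⟨s, hs, hxs⟩ := mem_space_iff.1 hx
  obtain ⟨w, hw⟩ := Finset.mem_convexHull_iff_exists_isConvexWeights.1 hxs
  exact ⟨w, s, hs, hw⟩

variable (K) in
noncomputable def baryCoords (y : K.space) : E → 𝕜 :=
  (K.exists_isConvexWeights_of_mem_space y.2).choose

theorem exists_isConvexWeights_baryCoords (y : K.space) :
    ∃ s ∈ K.faces, IsConvexWeights s (K.baryCoords y) y :=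
  (K.exists_isConvexWeights_of_mem_space y.2).choose_spec

theorem baryCoords_eq {y : K.space} (hs : s ∈ K.faces) (h : IsConvexWeights s w y) :
    K.baryCoords y = w :=
  let ⟨_, ht, hy⟩ := exists_isConvexWeights_baryCoords y
  isConvexWeights_unique ht hs hy h

variable {F : Type*} [AddCommGroup F] [Module 𝕜 F]

variable (K) in
/-- The map on `K.space` that is affine on each face and agrees with `p` at the vertices. -/
noncomputable def simplicialExtension (p : E → F) (y : K.space) : F :=
  ∑ᶠ v, K.baryCoords y v • p v

theorem simplicialExtension_eq (p : E → F) {y : K.space} (hs : s ∈ K.faces)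
    (h : IsConvexWeights s w y) : K.simplicialExtension p y = ∑ v ∈ s, w v • p v := by
  rw [simplicialExtension, baryCoords_eq hs h, h.finsum_smul_eq]

theorem simplicialExtension_mem_convexHull (p : E → F) (y : K.space) :
    K.simplicialExtension p y ∈ convexHull 𝕜 (p '' K.vertices) := by
  obtain ⟨s, hs, h⟩ := exists_isConvexWeights_baryCoords y
  rw [simplicialExtension_eq p hs h]
  exact (convex_convexHull 𝕜 _).sum_mem h.nonneg h.sum_eq_one fun v hv =>
    subset_convexHull 𝕜 _ ⟨v, subset_vertices hs hv, rfl⟩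

theorem simplicialExtension_injective [DecidableEq E] {p : E → F}
    (hp : ∀ s ∈ K.faces, ∀ t ∈ K.faces, AffineIndependent 𝕜 fun v : ↥(s ∪ t) => p v) :
    Function.Injective (K.simplicialExtension p) := by
  intro y₁ y₂ hy
  obtain ⟨s₁, hs₁, h₁⟩ := exists_isConvexWeights_baryCoords y₁
  obtain ⟨s₂, hs₂, h₂⟩ := exists_isConvexWeights_baryCoords y₂
  replace h₁ := h₁.mono (Finset.subset_union_left (s₂ := s₂))
  replace h₂ := h₂.mono (Finset.subset_union_right (s₁ := s₁))
  rw [simplicialExtension, simplicialExtension, h₁.finsum_smul_eq, h₂.finsum_smul_eq] at hy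
  have heq := (hp s₁ hs₁ s₂ hs₂).eq_of_sum_eq_sum_finset
    (h₁.sum_eq_one.trans h₂.sum_eq_one.symm) hy
  refine Subtype.ext ?_
  rw [← h₁.sum_smul_eq, ← h₂.sum_smul_eq]
  exact Finset.sum_congr rfl fun v hv => by rw [heq v hv]

end Field

section Real

variable {E F : Type*} [NormedAddCommGroup E] [NormedSpace ℝ E] [NormedAddCommGroup F]
  [NormedSpace ℝ F] {K : SimplicialComplex ℝ E} {s : Finset E}

theorem isCompact_space (hfin : K.faces.Finite) : IsCompact K.space :=
  hfin.isCompact_biUnion fun s _ => s.finite_toSet.isCompact_convexHull ℝ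

theorem continuousOn_simplicialExtension [FiniteDimensional ℝ E] (p : E → F)
    (hs : s ∈ K.faces) :
    ContinuousOn (K.simplicialExtension p) (Subtype.val ⁻¹' convexHull ℝ (s : Set E)) := by
  obtain ⟨A, hA⟩ := (K.indep hs).exists_affineMap_eq_on p
  refine (A.continuous_of_finiteDimensional.comp continuous_subtype_val).continuousOn.congr
    fun y hy => ?_
  obtain ⟨w, h⟩ := Finset.mem_convexHull_iff_exists_isConvexWeights.1 hy
  rw [simplicialExtension_eq p hs h, Function.comp_apply, h.map_affineMap A]
  exact Finset.sum_congr rfl fun v hv => by rw [hA v hv]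

theorem continuous_simplicialExtension [FiniteDimensional ℝ E] (hfin : K.faces.Finite)
    (p : E → F) :
    Continuous (K.simplicialExtension p) := by
  have := hfin.to_subtype
  refine (locallyFinite_of_finite fun s : K.faces =>
    Subtype.val ⁻¹' convexHull ℝ ((s : Finset E) : Set E)).continuous ?_ ?_ ?_
  · refine Set.eq_univ_of_forall fun y => ?_
    obtain ⟨s, hs, hy⟩ := mem_space_iff.1 y.2
    exact Set.mem_iUnion.2 ⟨⟨s, hs⟩, hy⟩
  · exact fun s => (s.1.finite_toSet.isClosed_convexHull ℝ).preimage continuous_subtype_val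
  · exact fun s => continuousOn_simplicialExtension p s.2

theorem isEmbedding_simplicialExtension [FiniteDimensional ℝ E] [DecidableEq E]
    (hfin : K.faces.Finite) {p : E → F}
    (hp : ∀ s ∈ K.faces, ∀ t ∈ K.faces, AffineIndependent ℝ fun v : ↥(s ∪ t) => p v) :
    Topology.IsEmbedding (K.simplicialExtension p) :=
  have := isCompact_iff_compactSpace.1 (isCompact_space hfin)
  ((continuous_simplicialExtension hfin p).isClosedEmbedding
    (simplicialExtension_injective hp)).isEmbedding

end Real

end Geometry.SimplicialComplex

open Geometry.SimplicialComplex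

/-- Every geometric simplicial complex in a finite-dimensional real normed space,
with finitely many faces, all of dimension at most `n` (i.e. with at most `n+1`
vertices), embeds topologically in the cube `[0,1]^(2n+1)`. -/
theorem stmt_0 (n : ℕ) (E : Type*) [NormedAddCommGroup E] [NormedSpace ℝ E]
    [FiniteDimensional ℝ E] (K : Geometry.SimplicialComplex ℝ E)
    (hfin : K.faces.Finite) (hdim : ∀ s ∈ K.faces, s.card ≤ n + 1) :
    ∃ f : K.space → (Fin (2 * n + 1) → ℝ),
      Topology.IsEmbedding f ∧ ∀ (y : K.space) (i : Fin (2 * n + 1)),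
        f y i ∈ Set.Icc (0 : ℝ) 1 := by
  classical
  obtain ⟨τ, hτ_maps, hτ_inj⟩ := (finite_vertices hfin).exists_injOn_of_encard_le
    (t := Set.Icc (0 : ℝ) 1) (by rw [(Set.Icc_infinite zero_lt_one).encard_eq]; exact le_top)
  set p : E → (Fin (2 * n + 1) → ℝ) := fun v => momentCurve (2 * n + 1) (τ v)
  have hp : ∀ s ∈ K.faces, ∀ t ∈ K.faces, AffineIndependent ℝ fun v : ↥(s ∪ t) => p v := by
    intro s hs t ht
    have hst : ((s ∪ t : Finset E) : Set E) ⊆ K.vertices := by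
      rw [Finset.coe_union]
      exact Set.union_subset (subset_vertices hs) (subset_vertices ht)
    refine affineIndependent_momentCurve (fun v₁ v₂ h => Subtype.ext
      (hτ_inj (hst v₁.2) (hst v₂.2) h)) ?_
    rw [Fintype.card_coe]
    linarith [Finset.card_union_le s t, hdim s hs, hdim t ht]
  have hp_cube : p '' K.vertices ⊆ Set.Icc 0 1 :=
    Set.image_subset_iff.2 fun v hv => momentCurve_mem_Icc (hτ_maps hv)
  refine ⟨K.simplicialExtension p, isEmbedding_simplicialExtension hfin hp, fun y i => ?_⟩
  have hy := convexHull_min hp_cube (convex_Icc 0 1) (simplicialExtension_mem_convexHull p y)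
  exact ⟨hy.1 i, hy.2 i⟩
end

section
/- Let X be a metric space, x ∈ X, and U : ℕ → Set X a sequence of subsets such that x belongs to the interior of each U_k, the closure of U_{k+1} is contained in the interior of U_k for each k, and ⋂_k U_k = {x}. Let W = ⋃_k (U_k × [k, k+1)) ⊆ X × ℝ, and let A = {(y,t) ∈ X × ℝ : t ≥ 0 and (y,t) ∉ W}, with the subspace topology from X × ℝ. Then the restriction to A of the first-coordinate projection X × ℝ → X is a well-defined continuous map h : A → X \ {x}, and h is a homotopy equivalence: there exists a continuous map g : X \ {x} → A with g ∘ h homotopic to the identity of A and h ∘ g homotopic to the identity of X \ {x}. -/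
/-!
Since the `U k` decrease, the fibre of `A` over `y` is `{t ≥ 0 | m + 1 ≤ t whenever y ∈ U m}`, an
intersection of half-lines and hence convex. A Urysohn function `φ = 1 + ∑ₖ fₖ`, with `fₖ`
vanishing off `interior (U k)` and equal to `1` on `closure (U (k + 1))`, is locally a finite sum
away from `x` and satisfies `m + 1 ≤ φ y` whenever `y ∈ U m`. Hence `y ↦ (y, φ y)` is a section of
the projection, and the straight-line homotopy in each (convex) fibre deforms `A` onto its image.
-/

open Set Topology ContinuousMap

section StaircaseHeight

variable {X : Type*} [TopologicalSpace X] {U : ℕ → Set X}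

theorem antitone_of_closure_succ_subset_interior
    (hU : ∀ k, closure (U (k + 1)) ⊆ interior (U k)) : Antitone U :=
  antitone_nat_of_succ_le fun k => subset_closure.trans ((hU k).trans interior_subset)

variable {F : ℕ → C(X, ℝ)}

theorem tsum_eq_sum_range_of_notMem (hU : Antitone U) (hF0 : ∀ k, EqOn (F k) 0 (interior (U k))ᶜ)
    {y : X} {n : ℕ} (hy : y ∉ U n) : ∑' k, F k y = ∑ k ∈ Finset.range n, F k y :=
  tsum_eq_sum fun k hk => hF0 k fun h => hy (hU (by simpa using hk) (interior_subset h))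

theorem continuousOn_tsum_of_closure_succ_subset_interior
    (hU : ∀ k, closure (U (k + 1)) ⊆ interior (U k)) (hF0 : ∀ k, EqOn (F k) 0 (interior (U k))ᶜ) :
    ContinuousOn (fun y => ∑' k, F k y) (⋂ k, U k)ᶜ := by
  intro y hy
  obtain ⟨n, hn⟩ : ∃ n, y ∉ U n := by simpa using hy
  have hnhds : (closure (U (n + 1)))ᶜ ∈ 𝓝 y :=
    isClosed_closure.isOpen_compl.mem_nhds fun h => hn (interior_subset (hU n h))
  have hsum : (fun z => ∑ k ∈ Finset.range (n + 1), F k z) =ᶠ[𝓝 y] fun z => ∑' k, F k z := by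
    filter_upwards [hnhds] with z hz
    exact (tsum_eq_sum_range_of_notMem (antitone_of_closure_succ_subset_interior hU) hF0
      fun h => hz (subset_closure h)).symm
  exact ((continuous_finsetSum _ fun k _ => (F k).continuous).continuousAt.congr
    hsum).continuousWithinAt

theorem nat_le_tsum_of_mem (hU : Antitone U) (hF0 : ∀ k, EqOn (F k) 0 (interior (U k))ᶜ)
    (hF1 : ∀ k, EqOn (F k) 1 (closure (U (k + 1)))) (hF_nonneg : ∀ k y, 0 ≤ F k y)
    {y : X} (hy : y ∉ ⋂ k, U k) {m : ℕ} (hym : y ∈ U m) : (m : ℝ) ≤ ∑' k, F k y := by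
  obtain ⟨n, hn⟩ : ∃ n, y ∉ U n := by simpa using hy
  have hmn : m ≤ n := le_of_lt <| lt_of_not_ge fun h => hn (hU h hym)
  calc (m : ℝ) = ∑ k ∈ Finset.range m, F k y := by
        rw [Finset.sum_congr rfl fun k hk => hF1 k (subset_closure
          (hU (Finset.mem_range.mp hk) hym))]
        simp
    _ ≤ ∑ k ∈ Finset.range n, F k y :=
        Finset.sum_le_sum_of_subset_of_nonneg (Finset.range_subset_range.mpr hmn)
          fun k _ _ => hF_nonneg k y
    _ = ∑' k, F k y := (tsum_eq_sum_range_of_notMem hU hF0 hn).symm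

theorem exists_continuousOn_compl_iInter_nat_succ_le [NormalSpace X]
    (hU : ∀ k, closure (U (k + 1)) ⊆ interior (U k)) :
    ∃ φ : X → ℝ, ContinuousOn φ (⋂ k, U k)ᶜ ∧ (∀ y, 0 ≤ φ y) ∧
      ∀ y ∉ ⋂ k, U k, ∀ m, y ∈ U m → (m : ℝ) + 1 ≤ φ y := by
  have hF : ∀ k, ∃ f : C(X, ℝ), EqOn f 0 (interior (U k))ᶜ ∧
      EqOn f 1 (closure (U (k + 1))) ∧ ∀ y, f y ∈ Icc (0 : ℝ) 1 := fun k =>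
    exists_continuous_zero_one_of_isClosed isOpen_interior.isClosed_compl isClosed_closure
      (disjoint_left.mpr fun _ hy hy' => hy (hU k hy'))
  choose F hF0 hF1 hF01 using hF
  have hF_nonneg : ∀ k y, 0 ≤ F k y := fun k y => (hF01 k y).1
  refine ⟨fun y => 1 + ∑' k, F k y,
    continuousOn_const.add (continuousOn_tsum_of_closure_succ_subset_interior hU hF0),
    fun y => add_nonneg zero_le_one (tsum_nonneg (hF_nonneg · y)), fun y hy m hym => ?_⟩
  have := nat_le_tsum_of_mem (antitone_of_closure_succ_subset_interior hU) hF0 hF1 hF_nonneg hy hym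
  linarith

end StaircaseHeight

theorem exists_homotopyEquiv_fst_of_convex_fibres {Y : Type*} [TopologicalSpace Y]
    {A : Set (Y × ℝ)} {S : Set Y} (hAS : ∀ p ∈ A, p.1 ∈ S) {φ : Y → ℝ} (hφ : ContinuousOn φ S)
    (hφA : ∀ y ∈ S, (y, φ y) ∈ A) (hA : ∀ y, Convex ℝ {t | (y, t) ∈ A}) :
    ∃ e : A ≃ₕ S, ∀ a, (e a : Y) = (a : Y × ℝ).1 := by
  let h : C(A, S) := ⟨fun a => ⟨a.1.1, hAS a a.2⟩, by fun_prop⟩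
  let g : C(S, A) :=
    ⟨fun y => ⟨(y, φ y), hφA y y.2⟩, (continuous_subtype_val.prodMk hφ.domRestrict).subtype_mk _⟩
  let H : (g.comp h).Homotopy (ContinuousMap.id A) :=
    { toFun := fun p => ⟨(p.2.1.1, (1 - p.1 : ℝ) * φ p.2.1.1 + p.1 * p.2.1.2),
        hA _ (hφA _ (hAS _ p.2.2)) p.2.2 (sub_nonneg.2 p.1.2.2) p.1.2.1 (sub_add_cancel 1 _)⟩
      continuous_toFun := by
        have hφ' : Continuous fun p : unitInterval × A => φ p.2.1.1 :=
          hφ.comp_continuous (by fun_prop) fun p => hAS _ p.2.2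
        exact (Continuous.prodMk (by fun_prop)
          (((continuous_const.sub (by fun_prop)).mul hφ').add (by fun_prop))).subtype_mk _
      map_zero_left := fun a => by ext <;> simp <;> rfl
      map_one_left := fun a => by ext <;> simp }
  exact ⟨⟨h, g, ⟨H⟩, Homotopic.refl _⟩, fun a => rfl⟩

def staircase {X : Type*} (U : ℕ → Set X) : Set (X × ℝ) :=
  ⋃ k : ℕ, U k ×ˢ Ico (k : ℝ) (k + 1)

theorem notMem_staircase_iff {X : Type*} {U : ℕ → Set X} (hU : Antitone U) {y : X} {t : ℝ}
    (ht : 0 ≤ t) : (y, t) ∉ staircase U ↔ ∀ m, y ∈ U m → (m : ℝ) + 1 ≤ t := by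
  simp only [staircase, mem_iUnion, mem_prod, mem_Ico, not_exists, not_and, not_lt]
  refine ⟨fun h m hym => ?_, fun h k hyk hkt => h k hyk⟩
  by_contra! htm
  have hfloor : ⌊t⌋₊ ≤ m := by
    have := Nat.floor_le ht
    exact_mod_cast Nat.lt_succ_iff.mp (by exact_mod_cast this.trans_lt htm)
  exact (Nat.lt_floor_add_one t).not_ge (h _ (hU hfloor hym) (Nat.floor_le ht))

/-- The projection of `X × [0,∞)` minus the staircase neighborhood
`W = ⋃ₖ Uₖ × [k, k+1)` onto `X \ {x}` is well defined and is a homotopy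
equivalence. -/
theorem stmt_4 (X : Type*) [MetricSpace X] (x : X) (U : ℕ → Set X)
    (hx : ∀ k, x ∈ interior (U k))
    (hcl : ∀ k, closure (U (k + 1)) ⊆ interior (U k))
    (hint : (⋂ k, U k) = {x})
    (W : Set (X × ℝ)) (hW : W = ⋃ k, (U k) ×ˢ (Set.Ico (k : ℝ) ((k : ℝ) + 1)))
    (A : Set (X × ℝ)) (hA : A = {p : X × ℝ | 0 ≤ p.2 ∧ p ∉ W}) :
    (∀ p ∈ A, p.1 ≠ x) ∧
    ∃ h : C(A, ({x}ᶜ : Set X)),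
      (∀ a : A, (h a : X) = ((a : X × ℝ)).1) ∧
      ∃ g : C(({x}ᶜ : Set X), A),
        (g.comp h).Homotopic (ContinuousMap.id A) ∧
        (h.comp g).Homotopic (ContinuousMap.id ({x}ᶜ : Set X)) := by
  have hmem : ∀ p, p ∈ A ↔ 0 ≤ p.2 ∧ ∀ m, p.1 ∈ U m → (m : ℝ) + 1 ≤ p.2 := fun p => by
    rw [hA, hW]
    exact and_congr_right (notMem_staircase_iff (antitone_of_closure_succ_subset_interior hcl))
  have hAx : ∀ p ∈ A, p.1 ≠ x := fun p hp hpx => by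
    obtain ⟨m, hm⟩ := exists_nat_gt p.2
    have := (hmem p).1 hp |>.2 m (hpx ▸ interior_subset (hx m))
    linarith
  have hconv : ∀ y, Convex ℝ {t | (y, t) ∈ A} := fun y => by
    have : {t | (y, t) ∈ A} = Ici 0 ∩ ⋂ m ∈ {m : ℕ | y ∈ U m}, Ici ((m : ℝ) + 1) := by
      ext t; simp [hmem]
    exact this ▸ (convex_Ici 0).inter (convex_iInter₂ fun m _ => convex_Ici _)
  obtain ⟨φ, hφ, hφ_nonneg, hφ_le⟩ := exists_continuousOn_compl_iInter_nat_succ_le hcl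
  rw [hint] at hφ hφ_le
  obtain ⟨e, he⟩ := exists_homotopyEquiv_fst_of_convex_fibres hAx hφ
    (fun y hy => (hmem _).2 ⟨hφ_nonneg y, hφ_le y hy⟩) hconv
  exact ⟨hAx, e.toFun, he, e.invFun, e.left_inv, e.right_inv⟩
end

section
/- Let X be a metric space, x ∈ X, and U : ℕ → Set X a sequence of subsets such that x belongs to the interior of each U_k, the closure of U_{k+1} is contained in the interior of U_k for each k, and ⋂_k U_k = {x}. Then there exists a continuous function φ : X \ {x} → ℝ with φ ≥ 0 such that for every n ∈ ℕ and every y ∈ X \ {x}, if φ(y) ≤ n then y ∉ U_n (equivalently, φ⁻¹([0,n]) ⊆ X \ U_n). -/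
/-- Existence of the auxiliary continuous function `φ : X \ {x} → [0,∞)` with
`φ⁻¹([0,n]) ⊆ X \ Uₙ`, used to define the homotopy inverse to the projection of
the complement of the staircase neighborhood. -/
theorem stmt_5 (X : Type*) [MetricSpace X] (x : X) (U : ℕ → Set X)
    (hx : ∀ k, x ∈ interior (U k))
    (hcl : ∀ k, closure (U (k + 1)) ⊆ interior (U k))
    (hint : (⋂ k, U k) = {x}) :
    ∃ φ : C(({x}ᶜ : Set X), ℝ),
      (∀ y, 0 ≤ φ y) ∧
      ∀ (n : ℕ) (y : ({x}ᶜ : Set X)), φ y ≤ (n : ℝ) → (y : X) ∉ U n := by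
  -- Urysohn functions: f k = 1 on closure (U (k+1)), 0 off interior (U k)
  have hf : ∀ k : ℕ, ∃ f : C(X, ℝ), Set.EqOn f 0 ((interior (U k))ᶜ) ∧
      Set.EqOn f 1 (closure (U (k + 1))) ∧ ∀ z, f z ∈ Set.Icc (0 : ℝ) 1 := by
    intro k
    exact exists_continuous_zero_one_of_isClosed isOpen_interior.isClosed_compl
      isClosed_closure (by
        rw [Set.disjoint_compl_left_iff_subset]
        exact hcl k)
  choose f hf0 hf1 hf01 using hf
  -- monotonicity
  have hsub : ∀ k, U (k + 1) ⊆ U k := fun k =>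
    (subset_closure.trans (hcl k)).trans interior_subset
  have hmono : ∀ {j k : ℕ}, j ≤ k → U k ⊆ U j := by
    intro j k hjk
    induction hjk with
    | refl => exact subset_rfl
    | step h ih => exact (hsub _).trans ih
  -- at each y ≠ x there is N with y ∉ U N
  have hN : ∀ y : X, y ≠ x → ∃ N, y ∉ U N := by
    intro y hy
    by_contra h
    push_neg at h
    have : y ∈ ⋂ k, U k := Set.mem_iInter.2 h
    rw [hint] at this
    exact hy this
  -- key vanishing fact
  have hvan : ∀ (N : ℕ) (z : X), z ∉ closure (U (N + 1)) → ∀ k, N + 1 ≤ k → f k z = 0 := by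
    intro N z hz k hk
    apply hf0 k
    intro hmem
    exact hz (subset_closure (hmono hk (interior_subset hmem)))
  set φ0 : X → ℝ := fun z => 1 + ∑' k, f k z with hφ0
  -- summability at points off closure (U (N+1))
  have hsum : ∀ (N : ℕ) (z : X), z ∉ closure (U (N + 1)) → Summable (fun k => f k z) := by
    intro N z hz
    apply summable_of_ne_finset_zero (s := Finset.range (N + 1))
    intro k hk
    exact hvan N z hz k (Nat.le_of_not_lt fun h => hk (Finset.mem_range.mpr h))
  -- continuity on {x}ᶜ
  have hcont : ContinuousOn φ0 ({x}ᶜ : Set X) := by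
    intro y hy
    apply ContinuousAt.continuousWithinAt
    obtain ⟨N, hyN⟩ := hN y (by simpa using hy)
    have hyc : y ∉ closure (U (N + 1)) := fun h => hyN (interior_subset (hcl N h))
    have hopen : IsOpen ((closure (U (N + 1)))ᶜ) := isClosed_closure.isOpen_compl
    have hmemV : ((closure (U (N + 1)))ᶜ : Set X) ∈ nhds y := hopen.mem_nhds hyc
    have heq : φ0 =ᶠ[nhds y] fun z => 1 + ∑ k ∈ Finset.range (N + 1), f k z := by
      filter_upwards [hmemV] with z hz
      have : ∑' k, f k z = ∑ k ∈ Finset.range (N + 1), f k z := by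
        apply tsum_eq_sum
        intro k hk
        exact hvan N z hz k (Nat.le_of_not_lt (by simpa [Finset.mem_range] using hk))
      simp [hφ0, this]
    rw [continuousAt_congr heq]
    exact (continuous_const.add (continuous_finset_sum _ fun k _ => (f k).continuous)).continuousAt
  refine ⟨⟨fun y => φ0 y, hcont.restrict⟩, ?_, ?_⟩
  · intro y
    have hyx : (y : X) ≠ x := y.2
    obtain ⟨N, hyN⟩ := hN y hyx
    have hyc : (y : X) ∉ closure (U (N + 1)) := fun h => hyN (interior_subset (hcl N h))
    have : (0:ℝ) ≤ ∑' k, f k (y : X) := tsum_nonneg fun k => (hf01 k _).1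
    simp only [ContinuousMap.coe_mk, hφ0]
    linarith
  · intro n y hle hyU
    have hyx : (y : X) ≠ x := y.2
    obtain ⟨N, hyN⟩ := hN y hyx
    have hyc : (y : X) ∉ closure (U (N + 1)) := fun h => hyN (interior_subset (hcl N h))
    have hsummy := hsum N (y : X) hyc
    have hone : ∀ k < n, f k (y : X) = 1 := by
      intro k hk
      exact hf1 k (subset_closure (hmono hk hyU))
    have h1 : (n : ℝ) = ∑ k ∈ Finset.range n, f k (y : X) := by
      rw [Finset.sum_congr rfl (fun k hk => hone k (Finset.mem_range.mp hk))]
      simp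
    have h2 : ∑ k ∈ Finset.range n, f k (y : X) ≤ ∑' k, f k (y : X) :=
      Summable.sum_le_tsum _ (fun k _ => (hf01 k _).1) hsummy
    have : φ0 (y : X) ≤ n := hle
    rw [hφ0] at this
    simp only at this
    linarith [h1 ▸ h2]
end

section
/- Let V be a type, n ∈ ℕ, and let K ⊆ Finset V be an abstract simplicial complex of dimension at most n: every σ ∈ K is nonempty and has cardinality at most n+1, and every nonempty subset of a member of K is a member of K. For each i ∈ Fin (n+1) let K_i = {σ ∈ K : σ.card = i+1}, partially ordered by inclusion of finsets (so that distinct elements of K_i are incomparable), and let WithBot K_i be K_i with a bottom element ⊥ adjoined. Consider the partially ordered set C(K) of nonempty chains of K, i.e. nonempty sets C of elements of K that are pairwise comparable under ⊆, ordered by inclusion of chains. Then the map sending a chain C to the tuple in ∏_{i ∈ Fin (n+1)} WithBot K_i whose i-th entry is the unique element of C of cardinality i+1 if C contains one, and ⊥ otherwise, is well defined and is an order embedding of C(K) into the product ∏_{i ∈ Fin (n+1)} WithBot K_i with the componentwise order (C ⊆ C' if and only if the corresponding tuples satisfy ≤ in every coordinate). -/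
/-- The barycentric subdivision of an abstract simplicial complex of dimension
at most `n` (the poset of nonempty chains of faces ordered by inclusion) order
embeds into the product `∏ i, WithBot Kᵢ`, where `Kᵢ` is the antichain of faces
of cardinality `i+1`, via the map sending a chain to its tuple of elements of
each cardinality (or `⊥` when there is none). -/
theorem stmt_6 (V : Type*) (n : ℕ) (K : Set (Finset V))
    (hne : ∀ σ ∈ K, σ.Nonempty)
    (hcard : ∀ σ ∈ K, σ.card ≤ n + 1)
    (hdown : ∀ σ ∈ K, ∀ τ : Finset V, τ ⊆ σ → τ.Nonempty → τ ∈ K) :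
    ∃ F : {C : Set (Finset V) // C ⊆ K ∧ C.Nonempty ∧ IsChain (· ⊆ ·) C} ↪o
        (∀ i : Fin (n + 1), WithBot {σ : Finset V // σ ∈ K ∧ σ.card = (i : ℕ) + 1}),
      (∀ (C : {C : Set (Finset V) // C ⊆ K ∧ C.Nonempty ∧ IsChain (· ⊆ ·) C})
          (i : Fin (n + 1)) (σ : Finset V) (hσK : σ ∈ K) (hσC : σ ∈ C.1)
          (hσc : σ.card = (i : ℕ) + 1),
          F C i = ((⟨σ, hσK, hσc⟩ : {σ : Finset V // σ ∈ K ∧ σ.card = (i : ℕ) + 1}) :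
            WithBot {σ : Finset V // σ ∈ K ∧ σ.card = (i : ℕ) + 1})) ∧
      (∀ (C : {C : Set (Finset V) // C ⊆ K ∧ C.Nonempty ∧ IsChain (· ⊆ ·) C})
          (i : Fin (n + 1)), (∀ σ ∈ C.1, σ.card ≠ (i : ℕ) + 1) → F C i = ⊥) := by
  classical
  -- uniqueness of an element of given card in a chain
  have huniq : ∀ (C : Set (Finset V)), IsChain (· ⊆ ·) C → ∀ σ ∈ C, ∀ τ ∈ C,
      σ.card = τ.card → σ = τ := by
    intro C hC σ hσ τ hτ hcardeq
    rcases eq_or_ne σ τ with h | h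
    · exact h
    · rcases hC hσ hτ h with h' | h'
      · exact Finset.eq_of_subset_of_card_le h' (le_of_eq hcardeq.symm)
      · exact (Finset.eq_of_subset_of_card_le h' (le_of_eq hcardeq)).symm
  set T := {C : Set (Finset V) // C ⊆ K ∧ C.Nonempty ∧ IsChain (· ⊆ ·) C}
  let f : T → ∀ i : Fin (n + 1), WithBot {σ : Finset V // σ ∈ K ∧ σ.card = (i : ℕ) + 1} :=
    fun C i =>
      if h : ∃ σ ∈ C.1, σ.card = (i : ℕ) + 1 then
        ((⟨h.choose, C.2.1 h.choose_spec.1, h.choose_spec.2⟩ :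
          {σ : Finset V // σ ∈ K ∧ σ.card = (i : ℕ) + 1}) : WithBot _)
      else ⊥
  have hspec : ∀ (C : T) (i : Fin (n + 1)) (σ : Finset V) (hσK : σ ∈ K) (hσC : σ ∈ C.1)
      (hσc : σ.card = (i : ℕ) + 1),
      f C i = ((⟨σ, hσK, hσc⟩ : {σ : Finset V // σ ∈ K ∧ σ.card = (i : ℕ) + 1}) : WithBot _) := by
    intro C i σ hσK hσC hσc
    have h : ∃ σ ∈ C.1, σ.card = (i : ℕ) + 1 := ⟨σ, hσC, hσc⟩
    have heq : h.choose = σ :=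
      huniq C.1 C.2.2.2 h.choose h.choose_spec.1 σ hσC (h.choose_spec.2.trans hσc.symm)
    simp only [f, dif_pos h]
    congr 1
    exact Subtype.ext heq
  have hbot : ∀ (C : T) (i : Fin (n + 1)), (∀ σ ∈ C.1, σ.card ≠ (i : ℕ) + 1) → f C i = ⊥ := by
    intro C i h
    have : ¬ ∃ σ ∈ C.1, σ.card = (i : ℕ) + 1 := by
      rintro ⟨σ, hσ, hc⟩; exact h σ hσ hc
    simp only [f, dif_neg this]
  have hiff : ∀ C C' : T, f C ≤ f C' ↔ C ≤ C' := by
    intro C C'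
    constructor
    · intro hle σ hσ
      have hσK : σ ∈ K := C.2.1 hσ
      have h1 : 1 ≤ σ.card := Finset.card_pos.mpr (hne σ hσK)
      have h2 : σ.card ≤ n + 1 := hcard σ hσK
      set i : Fin (n + 1) := ⟨σ.card - 1, by omega⟩ with hi
      have hσc : σ.card = (i : ℕ) + 1 := by simp [hi]; omega
      have hC : f C i = ((⟨σ, hσK, hσc⟩ :
          {σ : Finset V // σ ∈ K ∧ σ.card = (i : ℕ) + 1}) : WithBot _) :=
        hspec C i σ hσK hσ hσc
      have hlei := hle i
      rw [hC] at hlei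
      by_cases h' : ∃ τ ∈ C'.1, τ.card = (i : ℕ) + 1
      · obtain ⟨τ, hτ, hτc⟩ := h'
        have hC' : f C' i = ((⟨τ, C'.2.1 hτ, hτc⟩ :
            {σ : Finset V // σ ∈ K ∧ σ.card = (i : ℕ) + 1}) : WithBot _) :=
          hspec C' i τ (C'.2.1 hτ) hτ hτc
        rw [hC'] at hlei
        have hsub : σ ⊆ τ := by
          rw [WithBot.coe_le_coe, Subtype.mk_le_mk, Finset.le_iff_subset] at hlei
          exact hlei
        have : σ = τ := Finset.eq_of_subset_of_card_le hsub (by omega)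
        rw [this]; exact hτ
      · have : f C' i = ⊥ := by
          apply hbot
          intro τ hτ hc
          exact h' ⟨τ, hτ, hc⟩
        rw [this] at hlei
        exact absurd hlei (WithBot.not_coe_le_bot _)
    · intro hsub i
      by_cases h : ∃ σ ∈ C.1, σ.card = (i : ℕ) + 1
      · obtain ⟨σ, hσ, hc⟩ := h
        rw [hspec C i σ (C.2.1 hσ) hσ hc, hspec C' i σ (C.2.1 hσ) (hsub hσ) hc]
      · rw [hbot C i (fun σ hσ hc => h ⟨σ, hσ, hc⟩)]
        exact bot_le
  exact ⟨OrderEmbedding.ofMapLEIff f hiff, hspec, hbot⟩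
end

section
/- Let G be a finitely generated abelian group and let A : ℕ → AddSubgroup G be an antitone sequence (A_{n+1} ≤ A_n for all n) such that each A_n is a direct summand of G, i.e. there exists an additive subgroup B_n with A_n ∩ B_n = ⊥ and A_n ⊔ B_n = ⊤. Then the sequence is eventually constant: there exists N such that A_n = A_N for all n ≥ N. In particular, G contains no infinite strictly decreasing chain of direct summands. -/
/-- A finitely generated abelian group contains no infinite strictly decreasing
chain of direct summands: any antitone sequence of direct summands is
eventually constant. -/
theorem stmt_7 (G : Type*) [AddCommGroup G] [AddGroup.FG G]
    (A : ℕ → AddSubgroup G) (hanti : ∀ n, A (n + 1) ≤ A n)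
    (hsummand : ∀ n, ∃ B : AddSubgroup G, A n ⊓ B = ⊥ ∧ A n ⊔ B = ⊤) :
    ∃ N, ∀ n ≥ N, A n = A N := by
  classical
  choose B hBinf hBsup using hsummand
  -- increasing chain of partial complements
  let K : ℕ → AddSubgroup G := fun n => Nat.rec ⊥ (fun n Kn => Kn ⊔ (A n ⊓ B (n + 1))) n
  have hKsucc : ∀ n, K (n + 1) = K n ⊔ (A n ⊓ B (n + 1)) := fun n => rfl
  have hmono : Monotone K := monotone_nat_of_le_succ fun n => by
    rw [hKsucc]; exact le_sup_left
  -- (A n ⊓ B (n+1)) ⊔ A (n+1) = A n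
  have hpiece : ∀ n, (A n ⊓ B (n + 1)) ⊔ A (n + 1) = A n := by
    intro n
    apply le_antisymm (sup_le inf_le_left (hanti n))
    intro a ha
    have hmem : a ∈ A (n + 1) ⊔ B (n + 1) := by rw [hBsup]; trivial
    rcases (AddSubgroup.mem_sup).1 hmem with ⟨x, hx, y, hy, hxy⟩
    have hyA : y ∈ A n := by
      have hy' : y = a - x := by rw [← hxy]; abel
      rw [hy']
      exact sub_mem ha (hanti n hx)
    rw [← hxy]
    exact add_mem (AddSubgroup.mem_sup_right hx)
      (AddSubgroup.mem_sup_left (AddSubgroup.mem_inf.2 ⟨hyA, hy⟩))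
  have hsup : ∀ n, K n ⊔ A n = A 0 := by
    intro n
    induction n with
    | zero => simp [K]
    | succ n ih =>
      rw [hKsucc, sup_assoc]
      have : (A n ⊓ B (n + 1)) ⊔ A (n + 1) = A n := hpiece n
      rw [this, ih]
  have hinf : ∀ n, K n ⊓ A n = ⊥ := by
    intro n
    induction n with
    | zero => simp [K]
    | succ n ih =>
      rw [eq_bot_iff]
      intro x hx
      rcases AddSubgroup.mem_inf.1 hx with ⟨hxK, hxA⟩
      rw [hKsucc] at hxK
      rcases (AddSubgroup.mem_sup).1 hxK with ⟨k, hk, c, hc, hkc⟩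
      rcases AddSubgroup.mem_inf.1 hc with ⟨hcA, hcB⟩
      have hkA : k ∈ A n := by
        have : k = x - c := by rw [← hkc]; abel
        rw [this]
        exact sub_mem (hanti n hxA) hcA
      have hk0 : k = 0 := by
        have : k ∈ K n ⊓ A n := AddSubgroup.mem_inf.2 ⟨hk, hkA⟩
        rw [ih] at this; exact this
      have hxc : x = c := by rw [← hkc, hk0, zero_add]
      have : x ∈ A (n + 1) ⊓ B (n + 1) := AddSubgroup.mem_inf.2 ⟨hxA, hxc ▸ hcB⟩
      rw [hBinf] at this
      exact this
  -- Noetherian: K stabilizes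
  haveI : Module.Finite ℤ G := Module.Finite.iff_addGroup_fg.2 ‹_›
  haveI : IsNoetherian ℤ G := inferInstance
  obtain ⟨N, hN⟩ := monotone_stabilizes_iff_noetherian.2 ‹IsNoetherian ℤ G›
    ⟨fun n => AddSubgroup.toIntSubmodule (K n), fun a b hab => by
      exact (AddSubgroup.toIntSubmodule).monotone (hmono hab)⟩
  have hKstab : ∀ n ≥ N, K n = K N := fun n hn =>
    (AddSubgroup.toIntSubmodule).injective (hN n hn).symm
  -- A stabilizes step by step
  have hantiA : Antitone A := antitone_nat_of_succ_le hanti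
  have hstep : ∀ n ≥ N, A (n + 1) = A n := by
    intro n hn
    apply le_antisymm (hanti n)
    intro a ha
    have ha0 : a ∈ A 0 := hantiA (Nat.zero_le n) ha
    rw [← hsup (n + 1), hKstab (n + 1) (le_trans hn (Nat.le_succ n))] at ha0
    rw [← hKstab n hn] at ha0
    rcases (AddSubgroup.mem_sup).1 ha0 with ⟨k, hk, a', ha', hka⟩
    have hkA : k ∈ A n := by
      have : k = a - a' := by rw [← hka]; abel
      rw [this]; exact sub_mem ha (hanti n ha')
    have hk0 : k = 0 := by
      have : k ∈ K n ⊓ A n := AddSubgroup.mem_inf.2 ⟨hk, hkA⟩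
      rw [hinf] at this; exact this
    have : a = a' := by rw [← hka, hk0, zero_add]
    rw [this]; exact ha'
  refine ⟨N, fun n hn => ?_⟩
  induction n with
  | zero => rw [Nat.le_zero.1 hn]
  | succ n ih =>
      rcases Nat.lt_or_ge N (n + 1) with h | h
      · have hn' : N ≤ n := Nat.lt_succ_iff.1 h
        rw [hstep n hn', ih hn']
      · have : n + 1 = N := le_antisymm h hn
        rw [this]
end

section
/- Let G : ℕ → Type be a family of finitely generated abelian groups with bonding homomorphisms f_n : G(n+1) →+ G(n), and for i ≤ j let π_{i,j} : G(j) →+ G(i) denote the composite f_i ∘ f_{i+1} ∘ ⋯ ∘ f_{j-1} (with π_{i,i} the identity). Suppose that for all i ≤ j the image of π_{i,j} is a direct summand of G(i), i.e. there is an additive subgroup B with (range π_{i,j}) ∩ B = ⊥ and (range π_{i,j}) ⊔ B = ⊤. Then the inverse sequence (G(n), f_n) satisfies the Mittag-Leffler condition: for every i there exists j ≥ i such that for all k ≥ j, the image of π_{i,k} equals the image of π_{i,j}. -/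
/-- A decreasing chain of direct summands of a finitely generated abelian group
stabilizes. -/
theorem summand_chain_stabilizes {H : Type} [AddCommGroup H] [AddGroup.FG H]
    (A : ℕ → AddSubgroup H) (hA : ∀ n, A (n + 1) ≤ A n)
    (hs : ∀ n, ∃ B : AddSubgroup H, A n ⊓ B = ⊥ ∧ A n ⊔ B = ⊤) :
    ∃ N, ∀ k, N ≤ k → A k = A N := by
  choose D hD1 hD2 using hs
  -- build increasing complements
  let B : ℕ → AddSubgroup H := fun n => Nat.rec (D 0)
    (fun n Bn => Bn ⊔ (D (n + 1) ⊓ A n)) n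
  have hBsucc : ∀ n, B (n + 1) = B n ⊔ (D (n + 1) ⊓ A n) := fun n => rfl
  have key : ∀ n, A n ⊓ B n = ⊥ ∧ A n ⊔ B n = ⊤ := by
    intro n
    induction n with
    | zero => exact ⟨hD1 0, hD2 0⟩
    | succ n ih =>
      obtain ⟨h1, h2⟩ := ih
      constructor
      · rw [hBsucc, eq_bot_iff]
        intro x hx
        rw [AddSubgroup.mem_inf] at hx
        obtain ⟨hxA, hxB⟩ := hx
        rw [AddSubgroup.mem_sup] at hxB
        obtain ⟨b, hb, c, hc, hbc⟩ := hxB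
        have hcA : c ∈ A n := (AddSubgroup.mem_inf.mp hc).2
        have hbA : b ∈ A n := by
          have : b = x - c := by rw [← hbc]; abel
          rw [this]
          exact (A n).sub_mem (hA n hxA) hcA
        have hb0 : b = 0 := by
          have : b ∈ A n ⊓ B n := AddSubgroup.mem_inf.mpr ⟨hbA, hb⟩
          rwa [h1, AddSubgroup.mem_bot] at this
        have hxc : x = c := by rw [← hbc, hb0, zero_add]
        have : x ∈ A (n + 1) ⊓ D (n + 1) := AddSubgroup.mem_inf.mpr ⟨hxA, hxc ▸ (AddSubgroup.mem_inf.mp hc).1⟩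
        rwa [hD1, AddSubgroup.mem_bot] at this
      · rw [hBsucc, eq_top_iff]
        intro x _
        -- x ∈ ⊤ = A n ⊔ B n
        have hx : x ∈ A n ⊔ B n := by rw [h2]; trivial
        rw [AddSubgroup.mem_sup] at hx
        obtain ⟨a, ha, b, hb, hab⟩ := hx
        -- a ∈ A n ≤ A (n+1) ⊔ (D (n+1) ⊓ A n)
        have ha' : a ∈ A (n + 1) ⊔ D (n + 1) := by rw [hD2]; trivial
        rw [AddSubgroup.mem_sup] at ha'
        obtain ⟨y, hy, d, hd, hyd⟩ := ha'
        have hdA : d ∈ A n := by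
          have : d = a - y := by rw [← hyd]; abel
          rw [this]; exact (A n).sub_mem ha (hA n hy)
        have : x = y + (b + d) := by rw [← hab, ← hyd]; abel
        rw [this]
        exact AddSubgroup.add_mem_sup hy
          (AddSubgroup.add_mem_sup hb (AddSubgroup.mem_inf.mpr ⟨hd, hdA⟩))
  have hBmono : Monotone B := monotone_nat_of_le_succ fun n => by
    rw [hBsucc]; exact le_sup_left
  -- Noetherian stabilization
  have : Module.Finite ℤ H := Module.Finite.iff_addGroup_fg.mpr inferInstance
  have hnoeth : IsNoetherian ℤ H := inferInstance
  obtain ⟨N, hN⟩ := monotone_stabilizes_iff_noetherian.mpr hnoeth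
    ⟨fun n => AddSubgroup.toIntSubmodule (B n),
      fun _ _ h => AddSubgroup.toIntSubmodule.monotone (hBmono h)⟩
  have hB : ∀ m, N ≤ m → B N = B m := fun m hm =>
    AddSubgroup.toIntSubmodule.injective (hN m hm)
  refine ⟨N, fun k hk => ?_⟩
  induction k, hk using Nat.le_induction with
  | base => rfl
  | succ k hk ih =>
    rw [← ih]
    refine le_antisymm (hA k) ?_
    intro x hx
    have hx' : x ∈ A (k + 1) ⊔ D (k + 1) := by rw [hD2]; trivial
    rw [AddSubgroup.mem_sup] at hx'
    obtain ⟨y, hy, d, hd, hyd⟩ := hx'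
    have hdA : d ∈ A k := by
      have : d = x - y := by rw [← hyd]; abel
      rw [this]; exact (A k).sub_mem hx (hA k hy)
    have hdB : d ∈ B k := by
      have h1 : d ∈ B (k + 1) := by
        rw [hBsucc]; exact AddSubgroup.mem_sup_right (AddSubgroup.mem_inf.mpr ⟨hd, hdA⟩)
      rwa [← hB (k + 1) (hk.trans (Nat.le_succ k)), hB k hk] at h1
    have hd0 : d = 0 := by
      have : d ∈ A k ⊓ B k := AddSubgroup.mem_inf.mpr ⟨hdA, hdB⟩
      rwa [(key k).1, AddSubgroup.mem_bot] at this
    have : x = y := by rw [← hyd, hd0, add_zero]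
    rwa [this]

/-- If in an inverse sequence of finitely generated abelian groups all the images
of the composite bonding homomorphisms are direct summands, then the sequence
satisfies the Mittag-Leffler condition. -/
theorem stmt_8 (G : ℕ → Type) [∀ n, AddCommGroup (G n)] [∀ n, AddGroup.FG (G n)]
    (f : ∀ n, G (n + 1) →+ G n)
    (π : ∀ i j, i ≤ j → (G j →+ G i))
    (hπself : ∀ i, π i i le_rfl = AddMonoidHom.id (G i))
    (hπstep : ∀ i j (h : i ≤ j),
      π i (j + 1) (h.trans (Nat.le_succ j)) = (π i j h).comp (f j))
    (hsummand : ∀ i j (h : i ≤ j), ∃ B : AddSubgroup (G i),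
      (π i j h).range ⊓ B = ⊥ ∧ (π i j h).range ⊔ B = ⊤) :
    ∀ i, ∃ j, ∃ h : i ≤ j, ∀ k (hk : j ≤ k),
      (π i k (h.trans hk)).range = (π i j h).range := by
  intro i
  have hcast : ∀ (k k' : ℕ) (e : k = k') (h : i ≤ k) (h' : i ≤ k'),
      (π i k h).range = (π i k' h').range := by
    rintro k k' rfl h h'; rfl
  set A : ℕ → AddSubgroup (G i) :=
    fun n => (π i (i + n) (Nat.le_add_right i n)).range with hAdef
  have hA : ∀ n, A (n + 1) ≤ A n := by
    intro n
    have : A (n + 1) = (π i ((i + n) + 1)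
        ((Nat.le_add_right i n).trans (Nat.le_succ (i + n)))).range :=
      hcast _ _ (by omega) _ _
    rw [this, hπstep i (i + n) (Nat.le_add_right i n)]
    rintro x ⟨y, rfl⟩
    exact ⟨f (i + n) y, rfl⟩
  obtain ⟨N, hN⟩ := summand_chain_stabilizes A hA
    (fun n => hsummand i (i + n) (Nat.le_add_right i n))
  refine ⟨i + N, Nat.le_add_right i N, fun k hk => ?_⟩
  have h1 : (π i k ((Nat.le_add_right i N).trans hk)).range = A (k - i) :=
    hcast _ _ (by omega) _ _
  rw [h1, hN (k - i) (by omega)]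
end

section
/- Let Φ : (ℕ → ℤ) →+ (ℕ → ℤ) be the additive homomorphism defined by Φ(g)(n) = g(n) − 2·g(n+1). Then the cokernel of Φ, namely the quotient group (ℕ → ℤ) ⧸ range Φ, is isomorphic as an abelian group to ℤ₂ ⧸ ℤ, the group of 2-adic integers modulo the image of the canonical inclusion ℤ →+ ℤ₂ (Mathlib's ℤ_[2] and the range of the integer cast homomorphism). -/
/-!
Evaluating an integer sequence as a power series at `p`, `ψ g = ∑ pⁿ g(n)`, gives a surjection
`ψ : ℤ^ℕ → ℤ_[p]` with `ψ g = g 0 + p · ψ (g ∘ succ)`, and `ψ` is the unique solution of this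
recursion along all shifts of `g`, because an element of `ℤ_[p]` divisible by every power of `p`
is zero. Hence `ψ (Φ g) = g 0`, so `ψ` maps the image of `Φ` into `ℤ`; conversely, if `ψ g` is an
integer then so are all `ψ` of the shifts of `g` (divide by `p` inside `ℤ`), and these integers form
a preimage of `g` under `Φ`. So `ψ` induces `coker Φ ≃ ℤ_[p] / ℤ`.
-/

theorem eq_zero_of_forall_eq_mul_succ {α : Type*} [CommMonoidWithZero α] [IsCancelMulZero α]
    [WfDvdMonoid α] {a : α} (ha : ¬IsUnit a) {e : ℕ → α} (he : ∀ n, e n = a * e (n + 1)) :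
    e 0 = 0 := by
  have hpow : ∀ n, e 0 = a ^ n * e n := by
    intro n
    induction n with
    | zero => rw [pow_zero, one_mul]
    | succ n ih => rw [ih, he n, pow_succ, mul_assoc]
  by_contra h
  obtain ⟨n, hn⟩ := FiniteMultiplicity.of_not_isUnit ha h
  exact hn ⟨_, hpow (n + 1)⟩

namespace PadicInt

variable (p : ℕ) [Fact p.Prime]

theorem summable_pow_mul_intCast (g : ℕ → ℤ) : Summable fun n ↦ (p : ℤ_[p]) ^ n * g n := by
  have hp : (1 : ℝ) < p := mod_cast (Fact.out : p.Prime).one_lt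
  refine .of_norm_bounded (summable_geometric_of_lt_one (r := (p : ℝ)⁻¹) (by positivity)
    (inv_lt_one_of_one_lt₀ hp)) fun n ↦ ?_
  rw [norm_mul, norm_pow, norm_p]
  exact mul_le_of_le_one_right (by positivity) (norm_le_one _)

noncomputable def evalAtP : (ℕ → ℤ) →+ ℤ_[p] :=
  AddMonoidHom.mk' (fun g ↦ ∑' n, (p : ℤ_[p]) ^ n * g n) fun a b ↦ by
    simp only [Pi.add_apply, Int.cast_add, mul_add]
    exact (summable_pow_mul_intCast p a).tsum_add (summable_pow_mul_intCast p b)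

theorem evalAtP_apply (g : ℕ → ℤ) : evalAtP p g = ∑' n, (p : ℤ_[p]) ^ n * g n := rfl

theorem evalAtP_eq_add_mul (g : ℕ → ℤ) :
    evalAtP p g = g 0 + p * evalAtP p (fun n ↦ g (n + 1)) := by
  rw [evalAtP_apply, (summable_pow_mul_intCast p g).tsum_eq_zero_add, evalAtP_apply,
    ← (summable_pow_mul_intCast p _).tsum_mul_left]
  simp only [pow_zero, one_mul, pow_succ, mul_comm _ (p : ℤ_[p]), mul_assoc]

theorem evalAtP_shift_eq_add_mul (g : ℕ → ℤ) (n : ℕ) :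
    evalAtP p (fun k ↦ g (k + n)) = g n + p * evalAtP p (fun k ↦ g (k + (n + 1))) := by
  rw [evalAtP_eq_add_mul, zero_add]
  simp only [add_right_comm _ 1 n, add_assoc]

theorem evalAtP_eq_of_forall_eq_add_mul (g : ℕ → ℤ) (y : ℕ → ℤ_[p])
    (hy : ∀ n, y n = g n + p * y (n + 1)) : evalAtP p g = y 0 := by
  have h := eq_zero_of_forall_eq_mul_succ prime_p.not_isUnit
    (e := fun n ↦ y n - evalAtP p (fun k ↦ g (k + n))) fun n ↦ by
      rw [hy n, evalAtP_shift_eq_add_mul]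
      ring
  simp only [add_zero, sub_eq_zero] at h
  exact h.symm

theorem exists_intCast_add_p_mul (x : ℤ_[p]) : ∃ (d : ℤ) (y : ℤ_[p]), x = d + p * y := by
  obtain ⟨d, -, hd⟩ := exists_mem_range x
  obtain ⟨y, hy⟩ := Ideal.mem_span_singleton.mp (maximalIdeal_eq_span_p (p := p) ▸ hd)
  exact ⟨d, y, by rw [Int.cast_natCast, ← hy, add_sub_cancel]⟩

theorem evalAtP_surjective : Function.Surjective (evalAtP p) := by
  intro x
  choose digit next hnext using exists_intCast_add_p_mul p
  refine ⟨fun n ↦ digit (next^[n] x),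
    evalAtP_eq_of_forall_eq_add_mul p _ (fun n ↦ next^[n] x) fun n ↦ ?_⟩
  rw [Function.iterate_succ_apply']
  exact hnext _

theorem exists_intCast_eq_of_p_mul_eq_intCast {x : ℤ_[p]} {k : ℤ} (h : p * x = k) :
    ∃ j : ℤ, x = j := by
  obtain ⟨j, rfl⟩ : (p : ℤ) ∣ k := by
    simpa using (pow_p_dvd_int_iff 1 k).mp (by simpa using Dvd.intro x h)
  refine ⟨j, mul_left_cancel₀ prime_p.ne_zero ?_⟩
  rwa [Int.cast_mul, Int.cast_natCast] at h

section Tower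

variable {p} {Φ : (ℕ → ℤ) →+ (ℕ → ℤ)} (hΦ : ∀ (g : ℕ → ℤ) (n : ℕ), Φ g n = g n - p * g (n + 1))
include hΦ

theorem evalAtP_map_eq_intCast (g : ℕ → ℤ) : evalAtP p (Φ g) = g 0 :=
  evalAtP_eq_of_forall_eq_add_mul p _ (fun n ↦ g n) fun n ↦ by
    rw [hΦ]
    push_cast
    ring

theorem mem_range_of_evalAtP_eq_intCast {g : ℕ → ℤ} {m : ℤ} (hm : evalAtP p g = m) :
    g ∈ Φ.range := by
  have hint : ∀ n, ∃ c : ℤ, evalAtP p (fun k ↦ g (k + n)) = c := by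
    intro n
    induction n with
    | zero => exact ⟨m, hm⟩
    | succ n ih =>
      obtain ⟨c, hc⟩ := ih
      refine exists_intCast_eq_of_p_mul_eq_intCast p (k := c - g n) ?_
      rw [Int.cast_sub, ← hc, evalAtP_shift_eq_add_mul p g n, add_sub_cancel_left]
  choose c hc using hint
  refine ⟨c, funext fun n ↦ Int.cast_injective (α := ℤ_[p]) ?_⟩
  rw [hΦ, Int.cast_sub, Int.cast_mul, ← hc, ← hc, evalAtP_shift_eq_add_mul]
  push_cast
  ring

theorem ker_mk_comp_evalAtP :
    ((QuotientAddGroup.mk' (Int.castAddHom ℤ_[p]).range).comp (evalAtP p)).ker = Φ.range := by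
  ext g
  simp only [AddMonoidHom.mem_ker, AddMonoidHom.comp_apply, QuotientAddGroup.mk'_apply,
    QuotientAddGroup.eq_zero_iff, AddMonoidHom.mem_range]
  constructor
  · rintro ⟨m, hm⟩
    exact mem_range_of_evalAtP_eq_intCast hΦ hm.symm
  · rintro ⟨a, rfl⟩
    exact ⟨a 0, (evalAtP_map_eq_intCast hΦ a).symm⟩

noncomputable def quotientRangeEquivQuotientRangeIntCast :
    ((ℕ → ℤ) ⧸ Φ.range) ≃+ (ℤ_[p] ⧸ (Int.castAddHom ℤ_[p]).range) :=
  (QuotientAddGroup.quotientAddEquivOfEq (ker_mk_comp_evalAtP hΦ).symm).trans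
    (QuotientAddGroup.quotientKerEquivOfSurjective _
      ((QuotientAddGroup.mk'_surjective _).comp (evalAtP_surjective p)))

end Tower

end PadicInt

/-- The derived limit `lim¹` of the tower `⋯ →2 ℤ →2 ℤ` (bonding maps are
multiplication by `2`), i.e. the cokernel of `Φ : (ℕ → ℤ) →+ (ℕ → ℤ)`,
`Φ(g)(n) = g(n) - 2·g(n+1)`, is isomorphic to `ℤ₂/ℤ`, the `2`-adic integers
modulo the image of `ℤ`. -/
theorem stmt_10 (Φ : (ℕ → ℤ) →+ (ℕ → ℤ))
    (hΦ : ∀ (g : ℕ → ℤ) (n : ℕ), Φ g n = g n - 2 * g (n + 1)) :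
    Nonempty (((ℕ → ℤ) ⧸ Φ.range) ≃+ (ℤ_[2] ⧸ (Int.castAddHom ℤ_[2]).range)) :=
  ⟨PadicInt.quotientRangeEquivQuotientRangeIntCast (p := 2) fun g n ↦ by exact_mod_cast hΦ g n⟩
end

section
/- For each n ∈ ℕ let G_n be the additive subgroup of finitely supported functions ℕ →₀ ℤ consisting of those g with g(i) = 0 for all i < n, so that G_{n+1} ≤ G_n, and consider the tower (G_n) with bonding maps the inclusions. Let Φ : (∏_n G_n) →+ (∏_n G_n) be defined by Φ(g)_n = g_n − g_{n+1} (where g_{n+1} ∈ G_{n+1} is viewed as an element of G_n). Then the cokernel of Φ is isomorphic as an abelian group to (∏_{i ∈ ℕ} ℤ) ⧸ (⊕_{i ∈ ℕ} ℤ), the quotient of the group of all functions ℕ → ℤ by the image of the natural inclusion of the group of finitely supported functions ℕ →₀ ℤ. -/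
/-- The derived limit `lim¹` of Jacob's ladder, the tower of inclusions
`⋯ ↪ ⊕_{i≥1} ℤ ↪ ⊕_{i≥0} ℤ`, is isomorphic to `(∏_ℕ ℤ)/(⊕_ℕ ℤ)`. Here the
`n`-th group `Gₙ` consists of the finitely supported functions `ℕ →₀ ℤ`
vanishing below `n`, and `lim¹` is the cokernel of `Φ(g)ₙ = gₙ - g_{n+1}`. -/
theorem stmt_11 (G : ℕ → AddSubgroup (ℕ →₀ ℤ))
    (hG : ∀ (n : ℕ) (g : ℕ →₀ ℤ), g ∈ G n ↔ ∀ i < n, g i = 0)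
    (Φ : (∀ n, G n) →+ (∀ n, G n))
    (hΦ : ∀ (g : ∀ n, G n) (n : ℕ),
      ((Φ g n : ℕ →₀ ℤ)) = (g n : ℕ →₀ ℤ) - (g (n + 1) : ℕ →₀ ℤ)) :
    Nonempty (((∀ n, G n) ⧸ Φ.range) ≃+
      ((ℕ → ℤ) ⧸ (Finsupp.coeFnAddHom : (ℕ →₀ ℤ) →+ (ℕ → ℤ)).range)) := by
  classical
  set N := (Finsupp.coeFnAddHom : (ℕ →₀ ℤ) →+ (ℕ → ℤ)).range
  -- the map F(h)(i) = ∑_{k ≤ i} h_k(i)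
  let F : (∀ n, G n) →+ (ℕ → ℤ) :=
  { toFun := fun h i => ∑ k ∈ Finset.range (i + 1), ((h k : ℕ →₀ ℤ) : ℕ → ℤ) i
    map_zero' := by funext i; simp
    map_add' := by
      intro a b; funext i
      simp [Finset.sum_add_distrib] }
  let π := (QuotientAddGroup.mk' N).comp F
  have hπ : ∀ h, π h = QuotientAddGroup.mk (F h) := fun _ => rfl
  have hsurj : Function.Surjective π := by
    intro q
    obtain ⟨f, rfl⟩ := QuotientAddGroup.mk'_surjective N q
    refine ⟨fun n => ⟨Finsupp.single n (f n), ?_⟩, ?_⟩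
    · rw [hG]
      intro i hi
      rw [Finsupp.single_apply, if_neg (by omega)]
    · rw [hπ]
      congr 1
      funext i
      show (∑ k ∈ Finset.range (i + 1), (Finsupp.single k (f k) : ℕ → ℤ) i) = f i
      have : ∀ k, (Finsupp.single k (f k) : ℕ → ℤ) i = if k = i then f k else 0 := by
        intro k; rw [Finsupp.single_apply]
      simp only [this]
      rw [Finset.sum_ite_eq' (Finset.range (i + 1)) i f]
      simp
  have hker : π.ker = Φ.range := by
    ext h
    constructor
    · intro hh
      have hmem : F h ∈ N := by
        rw [AddMonoidHom.mem_ker, hπ, QuotientAddGroup.eq_zero_iff] at hh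
        exact hh
      obtain ⟨c, hc⟩ : ∃ c : ℕ →₀ ℤ, (c : ℕ → ℤ) = F h := hmem
      -- the solution g_n = c - ∑_{k < n} h_k
      have hGmem : ∀ n, (c - ∑ k ∈ Finset.range n, (h k : ℕ →₀ ℤ)) ∈ G n := by
        intro n
        rw [hG]
        intro i hi
        have hsum : (∑ k ∈ Finset.range n, (h k : ℕ →₀ ℤ)) i
            = ∑ k ∈ Finset.range (i + 1), (h k : ℕ →₀ ℤ) i := by
          rw [Finsupp.finset_sum_apply]
          refine (Finset.sum_subset ?_ ?_).symm
          · intro k hk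
            simp only [Finset.mem_range] at hk ⊢; omega
          · intro k _ hk
            simp only [Finset.mem_range, not_lt] at hk
            exact (hG k (h k)).mp (h k).2 i (by omega)
        have hci : (c : ℕ → ℤ) i = ∑ k ∈ Finset.range (i + 1), (h k : ℕ →₀ ℤ) i := by
          rw [hc]; rfl
        simp only [Finsupp.sub_apply, hsum]
        rw [← hci]; ring
      refine ⟨fun n => ⟨_, hGmem n⟩, ?_⟩
      funext n
      refine Subtype.ext ?_
      rw [hΦ]
      show (c - ∑ k ∈ Finset.range n, (h k : ℕ →₀ ℤ))
          - (c - ∑ k ∈ Finset.range (n + 1), (h k : ℕ →₀ ℤ)) = (h n : ℕ →₀ ℤ)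
      rw [Finset.sum_range_succ]
      abel
    · rintro ⟨g, rfl⟩
      rw [AddMonoidHom.mem_ker, hπ, QuotientAddGroup.eq_zero_iff]
      refine ⟨g 0, ?_⟩
      funext i
      show ((g 0 : ℕ →₀ ℤ) : ℕ → ℤ) i
        = ∑ k ∈ Finset.range (i + 1), ((Φ g) k : ℕ →₀ ℤ) i
      have : ∀ k, ((Φ g) k : ℕ →₀ ℤ) i
          = (g k : ℕ →₀ ℤ) i - (g (k + 1) : ℕ →₀ ℤ) i := by
        intro k; rw [hΦ]; simp
      simp only [this]
      rw [Finset.sum_range_sub' (fun k => (g k : ℕ →₀ ℤ) i) (i + 1)]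
      have : (g (i + 1) : ℕ →₀ ℤ) i = 0 :=
        (hG (i + 1) (g (i + 1))).mp (g (i + 1)).2 i (by omega)
      rw [this]; ring
  exact ⟨(QuotientAddGroup.quotientAddEquivOfEq hker.symm).trans
    (QuotientAddGroup.quotientKerEquivOfSurjective π hsurj)⟩
end
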